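/- Let f : ℝ → ℝ and u : ℝ → ℝ be of class C⁴ and fix x ∈ ℝ. For the QUICK interpolation (κ = 1/2), the averaged flux at the right face is fourth-order accurate for the nonlinear flux: (f(uL(u,h)) + f(uR(u,h)))/2 − f(u(x + h/2)) = O(h⁴) as h → 0⁺. -/

import Mathlib

open Asymptotics Filter Set MeasureTheory

noncomputable def uL (κ x : ℝ) (v : ℝ → ℝ) (h : ℝ) : ℝ :=
  (v x + v (x + h)) / 2 - ((1 - κ) / 4) * (v (x + h) - 2 * v x + v (x - h))

noncomputable def uR (κ x : ℝ) (v : ℝ → ℝ) (h : ℝ) : ℝ :=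
  (v (x + h) + v x) / 2 - ((1 - κ) / 4) * (v (x + 2 * h) - 2 * v (x + h) + v x)

/-- Left-face interpolated value from the left: same formula with `x` replaced by `x - h`. -/
noncomputable def uLm (κ x : ℝ) (v : ℝ → ℝ) (h : ℝ) : ℝ := uL κ (x - h) v h

/-- Left-face interpolated value from the right: same formula with `x` replaced by `x - h`. -/
noncomputable def uRm (κ x : ℝ) (v : ℝ → ℝ) (h : ℝ) : ℝ := uR κ (x - h) v h

/-!
Each of `uL - m`, `uR - m` and their sum, with `m = u (x + h / 2)`, is a finite-difference
stencil in `u`. A stencil whose weights annihilate the monomials of degree `< n` is `O(hⁿ)`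
on `Cⁿ` functions by Taylor's theorem; this gives `O(h²)` for each deviation and, at `κ = 1/2`,
`O(h⁴)` for their sum. Expanding `f` to second order around `m`, the averaged flux minus `f m`
is `f' m` times the mean deviation plus squares of deviations, hence `O(h⁴)`.
-/

open scoped Topology NNReal Nat

noncomputable def stencil {N : ℕ} (w c : Fin N → ℝ) (v : ℝ → ℝ) (x h : ℝ) : ℝ :=
  ∑ i, w i * v (x + c i * h)

theorem stencil_isBigO_pow {N n : ℕ} (w c : Fin N → ℝ)
    (hmom : ∀ k < n, ∑ i, w i * c i ^ k = 0) {v : ℝ → ℝ} (hv : ContDiff ℝ n v) (x : ℝ) :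
    (fun h => stencil w c v x h) =O[𝓝 0] fun h => h ^ n := by
  set T := taylorWithinEval v n univ x
  set d := fun k => (k ! : ℝ)⁻¹ * iteratedDerivWithin k v univ x
  have hrem : ∀ i, (fun h => v (x + c i * h) - T (x + c i * h)) =O[𝓝 0] fun h => h ^ n := by
    intro i
    have ht : Tendsto (fun h : ℝ => x + c i * h) (𝓝 0) (𝓝 x) :=
      (by fun_prop : Continuous fun h : ℝ => x + c i * h).tendsto' 0 x (by simp)
    refine ((taylor_isLittleO_univ hv).isBigO.comp_tendsto ht).trans ?_
    simp only [Function.comp_def, add_sub_cancel_left, mul_pow]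
    exact (isBigO_refl _ _).const_mul_left _
  have hpoly : ∀ h, ∑ i, w i * T (x + c i * h) = (∑ i, w i * c i ^ n) * d n * h ^ n := by
    intro h
    have hcoef : ∀ k, ∑ i, w i * ((k ! : ℝ)⁻¹ * (c i * h) ^ k * iteratedDerivWithin k v univ x)
        = (∑ i, w i * c i ^ k) * d k * h ^ k := fun k => by
      simp only [Finset.sum_mul]
      exact Finset.sum_congr rfl fun i _ => by ring
    simp only [T, taylor_within_apply, add_sub_cancel_left, smul_eq_mul, Finset.mul_sum]
    rw [Finset.sum_comm, Finset.sum_range_succ, Finset.sum_eq_zero, zero_add, hcoef]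
    intro k hk
    rw [hcoef, hmom k (Finset.mem_range.1 hk), zero_mul, zero_mul]
  have hsplit : (fun h => stencil w c v x h) = fun h =>
      ∑ i, w i * (v (x + c i * h) - T (x + c i * h)) + (∑ i, w i * c i ^ n) * d n * h ^ n := by
    funext h
    simp only [stencil, mul_sub, Finset.sum_sub_distrib, hpoly]
    ring
  rw [hsplit]
  refine IsBigO.add ?_ ((isBigO_refl _ _).const_mul_left _)
  simpa only [Finset.sum_fn] using
    IsBigO.sum (s := Finset.univ) fun i _ => (hrem i).const_mul_left (w i)

theorem abs_sub_sub_deriv_mul_le {f : ℝ → ℝ} (hf : Differentiable ℝ f) {K : ℝ≥0} {y t : ℝ}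
    (hK : LipschitzOnWith K (deriv f) (uIcc y (y + t))) :
    |f (y + t) - f y - deriv f y * t| ≤ K * t ^ 2 := by
  have hg : ∀ z ∈ uIcc y (y + t), HasDerivWithinAt (fun z => f z - deriv f y * z)
      (deriv f z - deriv f y) (uIcc y (y + t)) z := fun z _ =>
    (((hf z).hasDerivAt.sub ((hasDerivAt_id z).const_mul _)).congr_deriv (by simp)).hasDerivWithinAt
  have hbound : ∀ z ∈ uIcc y (y + t), ‖deriv f z - deriv f y‖ ≤ K * |t| := fun z hz => by
    calc ‖deriv f z - deriv f y‖ ≤ K * |z - y| := by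
          simpa [Real.dist_eq] using hK.dist_le_mul z hz y left_mem_uIcc
      _ ≤ K * |t| :=
          mul_le_mul_of_nonneg_left (by simpa using abs_sub_left_of_mem_uIcc hz) K.coe_nonneg
  have := (convex_uIcc y (y + t)).norm_image_sub_le_of_norm_hasDerivWithin_le hg hbound
    left_mem_uIcc right_mem_uIcc
  rw [Real.norm_eq_abs, add_sub_cancel_left, Real.norm_eq_abs, mul_assoc, abs_mul_abs_self,
    ← sq] at this
  convert this using 2
  ring

theorem ContDiff.isBigO_sub_sub_deriv_mul {α : Type*} {f : ℝ → ℝ} (hf : ContDiff ℝ 2 f)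
    {l : Filter α} {m a : α → ℝ} {y₀ : ℝ} (hm : Tendsto m l (𝓝 y₀)) (ha : Tendsto a l (𝓝 0)) :
    (fun z => f (m z + a z) - f (m z) - deriv f (m z) * a z) =O[l] fun z => a z ^ 2 := by
  obtain ⟨hdiff, -, hd⟩ := (contDiff_succ_iff_deriv (f := f) (n := 1)).1 (by exact_mod_cast hf)
  obtain ⟨K, U, hU, hK⟩ := hd.locallyLipschitz y₀
  obtain ⟨ε, hε, hball⟩ := Metric.mem_nhds_iff.1 hU
  refine IsBigO.of_bound K ?_
  filter_upwards [hm (Metric.ball_mem_nhds y₀ (half_pos hε)),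
    ha (Metric.ball_mem_nhds 0 (half_pos hε))] with z hmz haz
  have hseg : uIcc (m z) (m z + a z) ⊆ U := fun w hw => hball <| by
    have hwm := abs_sub_left_of_mem_uIcc hw
    simp only [mem_preimage, Metric.mem_ball, Real.dist_eq, sub_zero] at hmz haz ⊢
    rw [add_sub_cancel_left] at hwm
    calc |w - y₀| ≤ |w - m z| + |m z - y₀| := abs_sub_le _ _ _
      _ < ε := by linarith
  simpa [abs_of_nonneg (sq_nonneg (a z))] using abs_sub_sub_deriv_mul_le hdiff (hK.mono hseg)

theorem ContDiff.isBigO_average_sub {α : Type*} {f : ℝ → ℝ} (hf : ContDiff ℝ 2 f)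
    {l : Filter α} {m p q g : α → ℝ} {y₀ : ℝ} (hm : Tendsto m l (𝓝 y₀)) (hg : Tendsto g l (𝓝 0))
    (hp : (fun z => p z - m z) =O[l] g) (hq : (fun z => q z - m z) =O[l] g)
    (hpq : (fun z => (p z - m z) + (q z - m z)) =O[l] fun z => g z ^ 2) :
    (fun z => (f (p z) + f (q z)) / 2 - f (m z)) =O[l] fun z => g z ^ 2 := by
  have hrem : ∀ r : α → ℝ, (fun z => r z - m z) =O[l] g →
      (fun z => f (r z) - f (m z) - deriv f (m z) * (r z - m z)) =O[l] fun z => g z ^ 2 := by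
    intro r hr
    simpa using (hf.isBigO_sub_sub_deriv_mul hm (hr.trans_tendsto hg)).trans (hr.pow 2)
  have hderiv : (fun z => deriv f (m z)) =O[l] fun _ => (1 : ℝ) :=
    ((hf.continuous_deriv one_le_two).tendsto y₀ |>.comp hm).isBigO_one ℝ
  have hlin := (hderiv.mul hpq).congr_right (fun z => one_mul (g z ^ 2))
  refine (((hrem p hp).add (hrem q hq)).add hlin).const_mul_left (1 / 2) |>.congr_left ?_
  intro z
  ring

theorem uL_sub_eq_stencil (κ x : ℝ) (v : ℝ → ℝ) (h : ℝ) :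
    uL κ x v h - v (x + h / 2) =
      stencil ![1 / 2 + (1 - κ) / 2, 1 / 2 - (1 - κ) / 4, -(1 - κ) / 4, -1]
        ![0, 1, -1, 1 / 2] v x h := by
  simp only [uL, stencil, Fin.sum_univ_four, Matrix.cons_val]
  ring_nf

theorem uR_sub_eq_stencil (κ x : ℝ) (v : ℝ → ℝ) (h : ℝ) :
    uR κ x v h - v (x + h / 2) =
      stencil ![1 / 2 - (1 - κ) / 4, 1 / 2 + (1 - κ) / 2, -(1 - κ) / 4, -1]
        ![0, 1, 2, 1 / 2] v x h := by
  simp only [uR, stencil, Fin.sum_univ_four, Matrix.cons_val]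
  ring_nf

theorem quick_uL_add_uR_sub_eq_stencil (x : ℝ) (v : ℝ → ℝ) (h : ℝ) :
    (uL (1 / 2) x v h - v (x + h / 2)) + (uR (1 / 2) x v h - v (x + h / 2)) =
      stencil ![9 / 8, 9 / 8, -1 / 8, -1 / 8, -2] ![0, 1, -1, 2, 1 / 2] v x h := by
  simp only [uL, uR, stencil, Fin.sum_univ_five, Matrix.cons_val]
  ring_nf

theorem uL_sub_isBigO_sq (κ x : ℝ) {v : ℝ → ℝ} (hv : ContDiff ℝ 2 v) :
    (fun h => uL κ x v h - v (x + h / 2)) =O[𝓝 0] fun h => h ^ 2 := by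
  simp only [uL_sub_eq_stencil]
  refine stencil_isBigO_pow _ _ (fun k hk => ?_) hv x
  interval_cases k <;> simp [Fin.sum_univ_four] <;> ring

theorem uR_sub_isBigO_sq (κ x : ℝ) {v : ℝ → ℝ} (hv : ContDiff ℝ 2 v) :
    (fun h => uR κ x v h - v (x + h / 2)) =O[𝓝 0] fun h => h ^ 2 := by
  simp only [uR_sub_eq_stencil]
  refine stencil_isBigO_pow _ _ (fun k hk => ?_) hv x
  interval_cases k <;> simp [Fin.sum_univ_four] <;> ring

theorem quick_uL_add_uR_sub_isBigO_pow_four (x : ℝ) {v : ℝ → ℝ} (hv : ContDiff ℝ 4 v) :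
    (fun h => (uL (1 / 2) x v h - v (x + h / 2)) + (uR (1 / 2) x v h - v (x + h / 2)))
      =O[𝓝 0] fun h => h ^ 4 := by
  simp only [quick_uL_add_uR_sub_eq_stencil]
  refine stencil_isBigO_pow _ _ (fun k hk => ?_) hv x
  interval_cases k <;> simp [Fin.sum_univ_five] <;> norm_num

theorem quick_averaged_flux_fourth_order (f u : ℝ → ℝ) (hf : ContDiff ℝ 4 f)
    (hu : ContDiff ℝ 4 u) (x : ℝ) :
    (fun h : ℝ => (f (uL (1 / 2) x u h) + f (uR (1 / 2) x u h)) / 2 - f (u (x + h / 2)))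
      =O[nhdsWithin 0 (Set.Ioi 0)] fun h : ℝ => h ^ 4 := by
  have hu2 : ContDiff ℝ 2 u := hu.of_le (by norm_num)
  have hmid : Tendsto (fun h : ℝ => u (x + h / 2)) (𝓝 0) (𝓝 (u x)) :=
    (hu.continuous.comp (by fun_prop)).tendsto' 0 _ (by simp)
  have hsq : Tendsto (fun h : ℝ => h ^ 2) (𝓝 0) (𝓝 0) :=
    (continuous_pow 2).tendsto' 0 0 (by simp)
  have hpq := quick_uL_add_uR_sub_isBigO_pow_four x hu
  rw [show (4 : ℕ) = 2 * 2 from rfl] at hpq ⊢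
  simp only [pow_mul] at hpq ⊢
  exact ((hf.of_le (by norm_num)).isBigO_average_sub hmid hsq (uL_sub_isBigO_sq _ x hu2)
    (uR_sub_isBigO_sq _ x hu2) hpq).mono nhdsWithin_le_nhds
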